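/- For skew-Hermitian operators A and B on a finite-dimensional Hilbert space with ‖A‖, ‖B‖ ≤ R, and all sufficiently small t, the first-order Trotter error satisfies ‖exp(t(A+B)) − exp(tA)·exp(tB)‖ ≤ C·t²·‖[A,B]‖ for a constant C depending only on R. -/

import Mathlib

/-!
Duhamel's formula: differentiating `s ↦ exp((t - s)(a + b)) exp(s a) exp(s b)` gives
`exp(t a) exp(t b) - exp(t(a + b)) = ∫₀ᵗ exp((t - s)(a + b)) [exp(s a), b] exp(s b) ds`,
and differentiating `u ↦ exp(u a) b exp((s - u) a)` in the same way gives
`[exp(s a), b] = ∫₀ˢ exp(u a) [a, b] exp((s - u) a) du`. So the commutator `[exp(s a), b]` is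
`O(|s| ‖[a, b]‖)`, and integrating once more gives the Trotter error `O(t² ‖[a, b]‖)`.
All exponential factors are bounded by `exp(|t| (‖a‖ + ‖b‖))`, because `|u| + |s - u| = |s|`
whenever `u` lies between `0` and `s`.
-/

open NormedSpace
open scoped Interval

lemma abs_add_abs_sub_eq_abs_of_mem_uIcc {u s : ℝ} (hu : u ∈ Set.uIcc 0 s) :
    |u| + |s - u| = |s| := by
  rcases Set.mem_uIcc.1 hu with ⟨h₀, h₁⟩ | ⟨h₀, h₁⟩
  · rw [abs_of_nonneg h₀, abs_of_nonneg (sub_nonneg.2 h₁), abs_of_nonneg (h₀.trans h₁)]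
    ring
  · rw [abs_of_nonpos h₁, abs_of_nonpos (sub_nonpos.2 h₀), abs_of_nonpos (h₀.trans h₁)]
    ring

namespace NormedSpace

variable {𝔸 : Type*} [NormedRing 𝔸] [NormedAlgebra ℝ 𝔸]

lemma norm_exp_le_exp_norm [NormOneClass 𝔸] (x : 𝔸) : ‖exp x‖ ≤ Real.exp ‖x‖ := by
  rw [exp_eq_tsum ℝ, Real.exp_eq_exp_ℝ, exp_eq_tsum_div]
  refine (norm_tsum_le_tsum_norm (norm_expSeries_summable' x)).trans <|
    Summable.tsum_le_tsum (fun n ↦ ?_) (norm_expSeries_summable' x)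
      (Real.summable_pow_div_factorial ‖x‖)
  rw [norm_smul, norm_inv, Real.norm_natCast, div_eq_inv_mul]
  gcongr
  exact norm_pow_le _ n

lemma norm_exp_smul_le [NormOneClass 𝔸] (a : 𝔸) (s : ℝ) :
    ‖exp (s • a)‖ ≤ Real.exp (|s| * ‖a‖) := by
  simpa only [norm_smul, Real.norm_eq_abs] using norm_exp_le_exp_norm (s • a)

variable [CompleteSpace 𝔸]

lemma continuous_exp_smul (a : 𝔸) : Continuous fun u : ℝ ↦ exp (u • a) :=
  (differentiable_exp_smul_const ℝ a).continuous

lemma exp_smul_mul_sub_mul_exp_smul_eq_integral (a b : 𝔸) (s : ℝ) :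
    exp (s • a) * b - b * exp (s • a) =
      ∫ u in (0 : ℝ)..s, exp (u • a) * (a * b - b * a) * exp ((s - u) • a) := by
  have hderiv : ∀ u : ℝ, HasDerivAt (fun u : ℝ ↦ exp (u • a) * (b * exp ((s - u) • a)))
      (exp (u • a) * (a * b - b * a) * exp ((s - u) • a)) u := fun u ↦ by
    have hsub : HasDerivAt (fun u : ℝ ↦ exp ((s - u) • a)) (-(a * exp ((s - u) • a))) u := by
      simpa [Function.comp_def] using
        (hasDerivAt_exp_smul_const' a (s - u)).scomp u ((hasDerivAt_id u).const_sub s)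
    refine ((hasDerivAt_exp_smul_const a u).mul (hsub.const_mul b)).congr_deriv ?_
    noncomm_ring
  have hcont : Continuous fun u : ℝ ↦ exp (u • a) * (a * b - b * a) * exp ((s - u) • a) :=
    ((continuous_exp_smul a).mul continuous_const).mul
      ((continuous_exp_smul a).comp (continuous_const.sub continuous_id))
  rw [intervalIntegral.integral_eq_sub_of_hasDerivAt (fun u _ ↦ hderiv u)
    (hcont.intervalIntegrable _ _)]
  simp

lemma exp_smul_mul_exp_smul_sub_exp_smul_add_eq_integral (a b : 𝔸) (t : ℝ) :
    exp (t • a) * exp (t • b) - exp (t • (a + b)) =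
      ∫ s in (0 : ℝ)..t,
        exp ((t - s) • (a + b)) * (exp (s • a) * b - b * exp (s • a)) * exp (s • b) := by
  have hderiv : ∀ s : ℝ,
      HasDerivAt (fun s : ℝ ↦ exp ((t - s) • (a + b)) * (exp (s • a) * exp (s • b)))
        (exp ((t - s) • (a + b)) * (exp (s • a) * b - b * exp (s • a)) * exp (s • b)) s :=
    fun s ↦ by
      have hsub : HasDerivAt (fun s : ℝ ↦ exp ((t - s) • (a + b)))
          (-(exp ((t - s) • (a + b)) * (a + b))) s := by
        simpa [Function.comp_def] using
          (hasDerivAt_exp_smul_const (a + b) (t - s)).scomp s ((hasDerivAt_id s).const_sub t)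
      refine (hsub.mul ((hasDerivAt_exp_smul_const' a s).mul
        (hasDerivAt_exp_smul_const' b s))).congr_deriv ?_
      simp only [Pi.mul_apply]
      noncomm_ring
  have hcont : Continuous fun s : ℝ ↦
      exp ((t - s) • (a + b)) * (exp (s • a) * b - b * exp (s • a)) * exp (s • b) :=
    (((continuous_exp_smul (a + b)).comp (continuous_const.sub continuous_id)).mul
      (((continuous_exp_smul a).mul continuous_const).sub
        (continuous_const.mul (continuous_exp_smul a)))).mul (continuous_exp_smul b)
  rw [intervalIntegral.integral_eq_sub_of_hasDerivAt (fun s _ ↦ hderiv s)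
    (hcont.intervalIntegrable _ _)]
  simp

variable [NormOneClass 𝔸]

lemma norm_exp_smul_mul_sub_mul_exp_smul_le (a b : 𝔸) (s : ℝ) :
    ‖exp (s • a) * b - b * exp (s • a)‖ ≤ Real.exp (|s| * ‖a‖) * ‖a * b - b * a‖ * |s| := by
  have hbound : ∀ u ∈ Ι (0 : ℝ) s, ‖exp (u • a) * (a * b - b * a) * exp ((s - u) • a)‖ ≤
      Real.exp (|s| * ‖a‖) * ‖a * b - b * a‖ := fun u hu ↦
    calc ‖exp (u • a) * (a * b - b * a) * exp ((s - u) • a)‖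
        ≤ Real.exp (|u| * ‖a‖) * ‖a * b - b * a‖ * Real.exp (|s - u| * ‖a‖) := by
          refine (norm_mul₃_le ..).trans ?_
          gcongr <;> exact norm_exp_smul_le ..
      _ = Real.exp (|s| * ‖a‖) * ‖a * b - b * a‖ := by
          rw [mul_right_comm, ← Real.exp_add, ← add_mul,
            abs_add_abs_sub_eq_abs_of_mem_uIcc (Set.uIoc_subset_uIcc hu)]
  calc ‖exp (s • a) * b - b * exp (s • a)‖
      ≤ Real.exp (|s| * ‖a‖) * ‖a * b - b * a‖ * |s - 0| := by
        rw [exp_smul_mul_sub_mul_exp_smul_eq_integral]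
        exact intervalIntegral.norm_integral_le_of_norm_le_const hbound
    _ = Real.exp (|s| * ‖a‖) * ‖a * b - b * a‖ * |s| := by rw [sub_zero]

theorem norm_exp_smul_add_sub_exp_smul_mul_exp_smul_le (a b : 𝔸) (t : ℝ) :
    ‖exp (t • (a + b)) - exp (t • a) * exp (t • b)‖ ≤
      Real.exp (|t| * (‖a‖ + ‖b‖)) * t ^ 2 * ‖a * b - b * a‖ := by
  have hbound : ∀ s ∈ Ι (0 : ℝ) t,
      ‖exp ((t - s) • (a + b)) * (exp (s • a) * b - b * exp (s • a)) * exp (s • b)‖ ≤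
        Real.exp (|t| * (‖a‖ + ‖b‖)) * ‖a * b - b * a‖ * |t| := fun s hs ↦ by
    have hst := abs_add_abs_sub_eq_abs_of_mem_uIcc (Set.uIoc_subset_uIcc hs)
    calc ‖exp ((t - s) • (a + b)) * (exp (s • a) * b - b * exp (s • a)) * exp (s • b)‖
        ≤ Real.exp (|t - s| * (‖a‖ + ‖b‖)) * (Real.exp (|s| * ‖a‖) * ‖a * b - b * a‖ * |s|) *
            Real.exp (|s| * ‖b‖) := by
          refine (norm_mul₃_le ..).trans ?_
          gcongr
          · exact (norm_exp_smul_le ..).trans (by gcongr; exact norm_add_le a b)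
          · exact norm_exp_smul_mul_sub_mul_exp_smul_le ..
          · exact norm_exp_smul_le ..
      _ = Real.exp (|t| * (‖a‖ + ‖b‖)) * ‖a * b - b * a‖ * |s| := by
          simp only [← hst, add_mul, mul_add, Real.exp_add]
          ring
      _ ≤ Real.exp (|t| * (‖a‖ + ‖b‖)) * ‖a * b - b * a‖ * |t| := by
          have : |s| ≤ |t| := by linarith [abs_nonneg (t - s)]
          gcongr
  calc ‖exp (t • (a + b)) - exp (t • a) * exp (t • b)‖
      ≤ Real.exp (|t| * (‖a‖ + ‖b‖)) * ‖a * b - b * a‖ * |t| * |t - 0| := by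
        rw [norm_sub_rev, exp_smul_mul_exp_smul_sub_exp_smul_add_eq_integral]
        exact intervalIntegral.norm_integral_le_of_norm_le_const hbound
    _ = Real.exp (|t| * (‖a‖ + ‖b‖)) * t ^ 2 * ‖a * b - b * a‖ := by
        rw [sub_zero, ← sq_abs]
        ring

end NormedSpace

theorem stmt_13_general (V : Type*) [NormedAddCommGroup V] [InnerProductSpace ℂ V]
    [FiniteDimensional ℂ V] (R : ℝ) :
    ∃ C : ℝ, 0 < C ∧ ∀ (A B : V →L[ℂ] V), ‖A‖ ≤ R → ‖B‖ ≤ R →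
      ∀ t : ℝ, |t| ≤ 1 →
        ‖exp (t • (A + B)) - exp (t • A) * exp (t • B)‖ ≤
          C * t ^ 2 * ‖A * B - B * A‖ := by
  refine ⟨Real.exp (2 * R), Real.exp_pos _, fun A B hA hB t ht ↦ ?_⟩
  -- `‖1‖ = 1` in `V →L[ℂ] V`, needed for the exponential bounds, only holds for nontrivial `V`.
  rcases subsingleton_or_nontrivial V with hV | hV
  · rw [Subsingleton.elim (exp (t • (A + B)) - exp (t • A) * exp (t • B)) 0, norm_zero]
    positivity
  · refine (norm_exp_smul_add_sub_exp_smul_mul_exp_smul_le A B t).trans ?_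
    have : |t| * (‖A‖ + ‖B‖) ≤ 2 * R := by
      nlinarith [abs_nonneg t, norm_nonneg A, norm_nonneg B]
    gcongr

/-- First-order Trotter error: for operators `A, B` with `‖A‖, ‖B‖ ≤ R` and `|t| ≤ 1`,
`‖exp(t(A+B)) − exp(tA) exp(tB)‖ ≤ C t² ‖[A,B]‖` for a constant `C` depending only on `R`. -/
theorem stmt_13 (V : Type*) [NormedAddCommGroup V] [InnerProductSpace ℂ V]
    [FiniteDimensional ℂ V] (R : ℝ) (hR : 0 < R) :
    ∃ C : ℝ, 0 < C ∧ ∀ (A B : V →L[ℂ] V), ‖A‖ ≤ R → ‖B‖ ≤ R →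
      ∀ t : ℝ, |t| ≤ 1 →
        ‖exp (t • (A + B)) - exp (t • A) * exp (t • B)‖ ≤
          C * t ^ 2 * ‖A * B - B * A‖ :=
  stmt_13_general V R
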